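/- Let Ω ⊂ ℝ^d be a nonempty connected open set which is uniformly C^{2,γ} with uniformly C^{2,γ} boundary parameter σ : ∂Ω → [0,1], and let L = Δ + q be an elliptic operator with q bounded and uniformly C^γ on Ω. Then −sup_Ω q ≤ λ(−L, Ω, σ) ≤ −inf_Ω q + λ(B₁, 0)·R_in^{−2}, where R_in ∈ (0, ∞] is the inradius of Ω (the supremum of radii of balls contained in Ω) and λ(B₁, 0) is the Dirichlet generalized principal eigenvalue of −Δ on the unit ball. -/

import Mathlib

open Set Metric Filter Topology MeasureTheory
open scoped RealInnerProductSpace ENNReal NNReal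

noncomputable section

/-- Euclidean space `ℝ^d`. -/
abbrev Euc (d : ℕ) : Type := EuclideanSpace ℝ (Fin d)

/-- The Laplacian of `u` at `x`: the trace of the second derivative. -/
noncomputable def lapl (d : ℕ) (u : Euc d → ℝ) (x : Euc d) : ℝ :=
  ∑ i : Fin d, iteratedFDeriv ℝ 2 u x
    ![EuclideanSpace.basisFun (Fin d) ℝ i, EuclideanSpace.basisFun (Fin d) ℝ i]

/-- `v` is an outward unit normal vector of `Ω` at the boundary point `x`. -/
def IsOutwardNormalAt {d : ℕ} (Ω : Set (Euc d)) (x v : Euc d) : Prop :=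
  ‖v‖ = 1 ∧ ∀ᶠ t in 𝓝[>] (0 : ℝ), x - t • v ∈ Ω ∧ x + t • v ∉ closure Ω

/-- `a` is the outward normal derivative `∂_v u (x)`, computed from inside the domain. -/
def HasOutwardDeriv {d : ℕ} (u : Euc d → ℝ) (x v : Euc d) (a : ℝ) : Prop :=
  Tendsto (fun t : ℝ => (u x - u (x - t • v)) / t) (𝓝[>] (0 : ℝ)) (𝓝 a)

/-- The boundary inequality `N_σ u = σ ∂_ν u + (1 - σ) u ≥ 0` on `∂Ω`. -/
def BoundaryGE {d : ℕ} (Ω : Set (Euc d)) (σ u : Euc d → ℝ) : Prop :=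
  ∀ x ∈ frontier Ω, (σ x = 0 → 0 ≤ u x) ∧
    ∀ v, IsOutwardNormalAt Ω x v → ∀ a, HasOutwardDeriv u x v a →
      0 ≤ σ x * a + (1 - σ x) * u x

/-- The boundary inequality `N_σ u ≤ 0` on `∂Ω`. -/
def BoundaryLE {d : ℕ} (Ω : Set (Euc d)) (σ u : Euc d → ℝ) : Prop :=
  ∀ x ∈ frontier Ω, (σ x = 0 → u x ≤ 0) ∧
    ∀ v, IsOutwardNormalAt Ω x v → ∀ a, HasOutwardDeriv u x v a →
      σ x * a + (1 - σ x) * u x ≤ 0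

/-- The boundary condition `N_σ u = 0` on `∂Ω`. -/
def BoundaryEQ {d : ℕ} (Ω : Set (Euc d)) (σ u : Euc d → ℝ) : Prop :=
  ∀ x ∈ frontier Ω, (σ x = 0 → u x = 0) ∧
    (σ x ≠ 0 → ∀ v, IsOutwardNormalAt Ω x v →
      ∃ a, HasOutwardDeriv u x v a ∧ σ x * a + (1 - σ x) * u x = 0)

/-- `μ` is admissible for the generalized principal eigenvalue of `−(Δ + q)` on `(Ω, σ)`:
there is a positive supersolution `φ` with `N_σ φ ≥ 0` and `−Δφ − qφ ≥ μ φ` in `Ω`. -/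
def GPEAdmissible (d : ℕ) (q : Euc d → ℝ) (Ω : Set (Euc d)) (σ : Euc d → ℝ) (μ : ℝ) : Prop :=
  ∃ φ : Euc d → ℝ, ContDiffOn ℝ 2 φ Ω ∧ ContinuousOn φ (closure Ω) ∧
    (∀ x ∈ Ω, 0 < φ x) ∧ BoundaryGE Ω σ φ ∧
    ∀ x ∈ Ω, μ * φ x ≤ -(lapl d φ x) - q x * φ x

/-- The generalized principal eigenvalue of `−(Δ + q)` on `(Ω, σ)` (equal to `+∞` for `Ω = ∅`,
and to the infimum of the eigenvalues of the connected components if `Ω` is disconnected). -/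
noncomputable def gpeOp (d : ℕ) (q : Euc d → ℝ) (Ω : Set (Euc d)) (σ : Euc d → ℝ) : EReal :=
  sSup ((fun μ : ℝ => (μ : EReal)) '' {μ | GPEAdmissible d q Ω σ μ})

/-- The generalized principal eigenvalue `λ(Ω, σ)` of `−Δ`. -/
noncomputable def gpe (d : ℕ) (Ω : Set (Euc d)) (σ : Euc d → ℝ) : EReal :=
  gpeOp d (fun _ => 0) Ω σ

/-- `λ(−L, Ω | B_R(x), σ)`: the eigenvalue on `Ω ∩ B_R(x)` with parameter `σ` on
`∂Ω ∩ B_R(x)` and Dirichlet conditions on the rest of the boundary. -/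
noncomputable def gpeCut (d : ℕ) (q : Euc d → ℝ) (Ω : Set (Euc d)) (σ : Euc d → ℝ)
    (x : Euc d) (R : ℝ) : EReal :=
  gpeOp d q (Ω ∩ ball x R) ((frontier Ω ∩ ball x R).indicator σ)

/-- `φ` has `C^{2,γ}` norm at most `K` on the set `s`. -/
def C2HolderBoundOn {E : Type*} [NormedAddCommGroup E] [NormedSpace ℝ E]
    (γ K : ℝ) (φ : E → ℝ) (s : Set E) : Prop :=
  ContDiffOn ℝ 2 φ s ∧
  (∀ x ∈ s, |φ x| ≤ K ∧ ‖fderivWithin ℝ φ s x‖ ≤ K ∧ ‖iteratedFDerivWithin ℝ 2 φ s x‖ ≤ K) ∧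
  ∀ x ∈ s, ∀ y ∈ s, ‖iteratedFDerivWithin ℝ 2 φ s x - iteratedFDerivWithin ℝ 2 φ s y‖
      ≤ K * ‖x - y‖ ^ γ

/-- The tube of radius `ρ` around the axis `ℝ e`. -/
def cylBase {d : ℕ} (e : Euc d) (ρ : ℝ) : Set (Euc d) := {p | ‖p - ⟪p, e⟫ • e‖ < ρ}

/-- A boundary chart for `Ω` at `x`: within the cylinder of radius and height `ρ` around `x`
in the unit direction `e`, the set `Ω` coincides with the hypograph of the function `φ`,
which is constant in the direction `e`, has values bounded by `bnd`, and has `C^{2,γ}` norm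
at most `K`. -/
def IsChartAt {d : ℕ} (ρ bnd γ K : ℝ) (e x : Euc d) (Ω : Set (Euc d)) (φ : Euc d → ℝ) : Prop :=
  ‖e‖ = 1 ∧ (∀ (p : Euc d) (t : ℝ), φ (p + t • e) = φ p) ∧ (∀ p, |φ p| ≤ bnd) ∧
  C2HolderBoundOn γ K φ (cylBase e ρ) ∧
  ∀ p : Euc d, p - x ∈ cylBase e ρ → |⟪p - x, e⟫| < ρ →
    (p ∈ Ω ↔ ⟪p - x, e⟫ < φ (p - x))

/-- `Ω ⊆ ℝ^d` is a uniformly `C^{2,γ}` open set with parameters `(r, K)`. -/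
def UniformSmooth {d : ℕ} (γ r K : ℝ) (Ω : Set (Euc d)) : Prop :=
  0 < γ ∧ γ ≤ 1 ∧ 0 < r ∧ r ≤ 1 ∧ 0 < K ∧
  ∀ x : Euc d, ball x (r / 8) ⊆ Ω ∨ ball x (r / 8) ⊆ Ωᶜ ∨
    ∃ e φ, IsChartAt r (r / 4) γ K e x Ω φ

/-- `σ` is a uniformly `C^{2,γ}` boundary parameter on `Ω`, with values in `[0,1]` on `∂Ω`. -/
def SmoothParam {d : ℕ} (γ K : ℝ) (Ω : Set (Euc d)) (σ : Euc d → ℝ) : Prop :=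
  (∀ x ∈ frontier Ω, σ x ∈ Icc (0 : ℝ) 1) ∧ C2HolderBoundOn γ K σ univ

/-- Locally uniform `C^{2,α}` convergence of a uniformly `C^{2,γ}` sequence of open sets:
near every point the sets eventually all contain a fixed small ball, or are all disjoint
from it, or are all given in a fixed cylinder by hypographs of functions converging in `C²`
(within the uniformly bounded `C^{2,γ}` family). -/
def DomainTendsto {d : ℕ} (γ r K : ℝ) (Ωn : ℕ → Set (Euc d)) (Ωinf : Set (Euc d)) : Prop :=
  ∀ x : Euc d,
    ((∃ N, ∀ n ≥ N, ball x (r / 16) ⊆ Ωn n) ∧ ball x (r / 16) ⊆ Ωinf) ∨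
    ((∃ N, ∀ n ≥ N, ball x (r / 16) ⊆ (Ωn n)ᶜ) ∧ ball x (r / 16) ⊆ Ωinfᶜ) ∨
    ∃ (N : ℕ) (e : Euc d) (φn : ℕ → Euc d → ℝ) (φinf : Euc d → ℝ),
      (∀ n ≥ N, IsChartAt (r / 2) (r / 2) γ K e x (Ωn n) (φn n)) ∧
      IsChartAt (r / 2) (r / 2) γ K e x Ωinf φinf ∧
      ∀ k : ℕ, k ≤ 2 →
        TendstoUniformlyOn
          (fun n q => iteratedFDerivWithin ℝ k (φn n) (cylBase e (r / 2)) q)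
          (fun q => iteratedFDerivWithin ℝ k φinf (cylBase e (r / 2)) q)
          atTop (cylBase e (r / 2))

/-- The translate `Ω − y`. -/
def translateSet {d : ℕ} (Ω : Set (Euc d)) (y : Euc d) : Set (Euc d) := {p | p + y ∈ Ω}

/-- `Ωstar` is the connected limit of `Ω` along the sequence `x`: the translates `Ω − x n`
converge locally uniformly in `C^{2,α}` to some `Ωinf`, and `Ωstar` is the connected
component of `Ωinf` whose closure contains the origin. -/
def IsConnectedLimitAlong {d : ℕ} (γ r K : ℝ) (Ω : Set (Euc d)) (x : ℕ → Euc d)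
    (Ωstar : Set (Euc d)) : Prop :=
  (∀ n, x n ∈ Ω) ∧
  ∃ (Ωinf : Set (Euc d)) (y : Euc d),
    DomainTendsto γ r K (fun n => translateSet Ω (x n)) Ωinf ∧
    y ∈ Ωinf ∧ Ωstar = connectedComponentIn Ωinf y ∧ (0 : Euc d) ∈ closure Ωstar

/-- `Ωstar` is a connected limit of `Ω` along some sequence in `Ω`. -/
def IsConnectedLimit {d : ℕ} (γ r K : ℝ) (Ω : Set (Euc d)) (Ωstar : Set (Euc d)) : Prop :=
  ∃ x : ℕ → Euc d, IsConnectedLimitAlong γ r K Ω x Ωstar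

/-- The principal limit spectrum `Σ(Ω, σ)` for a fixed (e.g. constant) boundary parameter. -/
def limSpec {d : ℕ} (γ r K : ℝ) (Ω : Set (Euc d)) (σ : Euc d → ℝ) : Set EReal :=
  {l | ∃ Ωstar, IsConnectedLimit γ r K Ω Ωstar ∧ l = gpe d Ωstar σ}

/-- `(Ωstar, σstar)` is the connected limit of the sequence of pairs `(Ωn, σn)`. -/
def IsConnectedLimitPairOf {d : ℕ} (γ r K : ℝ) (Ωn : ℕ → Set (Euc d)) (σn : ℕ → Euc d → ℝ)
    (Ωstar : Set (Euc d)) (σstar : Euc d → ℝ) : Prop :=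
  ∃ (Ωinf : Set (Euc d)) (y : Euc d),
    DomainTendsto γ r K Ωn Ωinf ∧
    (∀ k : ℕ, k ≤ 2 →
      TendstoLocallyUniformly (fun n q => iteratedFDeriv ℝ k (σn n) q)
        (fun q => iteratedFDeriv ℝ k σstar q) atTop) ∧
    y ∈ Ωinf ∧ Ωstar = connectedComponentIn Ωinf y ∧ (0 : Euc d) ∈ closure Ωstar

/-- The principal limit spectrum `Σ(Ω, σ)` of a pair, for a variable boundary parameter. -/
def limSpecPair {d : ℕ} (γ r K : ℝ) (Ω : Set (Euc d)) (σ : Euc d → ℝ) : Set EReal :=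
  {l | ∃ (x : ℕ → Euc d) (Ωstar : Set (Euc d)) (σstar : Euc d → ℝ),
    (∀ n, x n ∈ Ω) ∧
    IsConnectedLimitPairOf γ r K (fun n => translateSet Ω (x n))
      (fun n q => σ (q + x n)) Ωstar σstar ∧
    l = gpe d Ωstar σstar}

/-- A reaction: `f : [0, ∞) → ℝ` is `C^{1,γ}`, `f(0) = f(1) = 0`, and `f < 0` on `(1, ∞)`. -/
def IsReaction (γ : ℝ) (f : ℝ → ℝ) : Prop :=
  ContDiffOn ℝ 1 f (Ici 0) ∧
  (∀ M : ℝ, ∃ C : ℝ, ∀ x ∈ Icc (0 : ℝ) M, ∀ y ∈ Icc (0 : ℝ) M,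
    |derivWithin f (Ici 0) x - derivWithin f (Ici 0) y| ≤ C * |x - y| ^ γ) ∧
  f 0 = 0 ∧ f 1 = 0 ∧ ∀ s : ℝ, 1 < s → f s < 0

/-- The one-sided derivative `f'(0)`. -/
noncomputable def fp0 (f : ℝ → ℝ) : ℝ := derivWithin f (Ici 0) 0

/-- A positive ("monostable") reaction. -/
def PositiveReaction (γ : ℝ) (f : ℝ → ℝ) : Prop :=
  IsReaction γ f ∧ (∀ s ∈ Ioo (0 : ℝ) 1, 0 < f s) ∧ 0 < fp0 f

/-- A weak-KPP reaction. -/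
def WeakKPP (γ : ℝ) (f : ℝ → ℝ) : Prop :=
  PositiveReaction γ f ∧ ∀ s ∈ Icc (0 : ℝ) 1, f s ≤ fp0 f * s

/-- A strong-KPP reaction. -/
def StrongKPP (γ : ℝ) (f : ℝ → ℝ) : Prop :=
  WeakKPP γ f ∧ StrictAntiOn (fun s => f s / s) (Ioc (0 : ℝ) 1)

/-- A positive bounded solution of `−Δu = f(u)` in `Ω`, `N_σ u = 0` on `∂Ω`. -/
def IsPosBddSolution {d : ℕ} (Ω : Set (Euc d)) (σ : Euc d → ℝ) (f : ℝ → ℝ)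
    (u : Euc d → ℝ) : Prop :=
  ContDiffOn ℝ 2 u Ω ∧ ContinuousOn u (closure Ω) ∧
  (∃ M, ∀ x ∈ closure Ω, |u x| ≤ M) ∧
  (∀ x ∈ Ω, 0 < u x) ∧
  (∀ x ∈ Ω, -(lapl d u x) = f (u x)) ∧
  BoundaryEQ Ω σ u

/-- A solution of the parabolic problem `∂_t v = Δv + f(v)` in `Ω`, `N_σ v = 0` on `∂Ω`,
belonging to `C²([0,∞) × Ω̄)`. -/
def IsParabolicSol {d : ℕ} (Ω : Set (Euc d)) (σ : Euc d → ℝ) (f : ℝ → ℝ)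
    (v : ℝ → Euc d → ℝ) : Prop :=
  ContDiffOn ℝ 2 (fun p : ℝ × Euc d => v p.1 p.2) (Ici (0 : ℝ) ×ˢ closure Ω) ∧
  (∀ t ∈ Ici (0 : ℝ), ∀ x ∈ Ω,
    derivWithin (fun s => v s x) (Ici (0 : ℝ)) t = lapl d (v t) x + f (v t x)) ∧
  ∀ t ∈ Ici (0 : ℝ), BoundaryEQ Ω σ (v t)

/-- `Ω` is invariant under all translations in some full-rank lattice. -/
def PeriodicDomain {d : ℕ} (Ω : Set (Euc d)) : Prop :=
  ∃ b : Fin d → Euc d, LinearIndependent ℝ b ∧ ∀ i, translateSet Ω (b i) = Ω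

/-- The (possibly infinite) inradius of `Ω`. -/
noncomputable def inradius {d : ℕ} (Ω : Set (Euc d)) : ℝ≥0∞ :=
  ⨆ (x : Euc d) (s : ℝ≥0) (_ : ball x (s : ℝ) ⊆ Ω), (s : ℝ≥0∞)

/-- `q` is bounded and uniformly `C^γ` (Hölder) on `Ω`. -/
def BddHolderOn {d : ℕ} (γ : ℝ) (q : Euc d → ℝ) (Ω : Set (Euc d)) : Prop :=
  ∃ C : ℝ, (∀ x ∈ Ω, |q x| ≤ C) ∧
    ∀ x ∈ Ω, ∀ y ∈ Ω, |q x - q y| ≤ C * ‖x - y‖ ^ γ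

/-- `φ ∈ C^{2,γ}_loc(s)`: `C²` on `s`, with locally `γ`-Hölder second derivatives. -/
def C2HolderLocOn {E : Type*} [NormedAddCommGroup E] [NormedSpace ℝ E]
    (γ : ℝ) (φ : E → ℝ) (s : Set E) : Prop :=
  ContDiffOn ℝ 2 φ s ∧
  ∀ p ∈ s, ∃ ε > 0, ∃ C : ℝ, ∀ x ∈ s ∩ ball p ε, ∀ y ∈ s ∩ ball p ε,
    ‖iteratedFDerivWithin ℝ 2 φ s x - iteratedFDerivWithin ℝ 2 φ s y‖ ≤ C * ‖x - y‖ ^ γ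

/-- `u` is bounded in `C^{2,γ}` on `Ω` (and continuous up to the boundary). -/
def C2gammaBdd {d : ℕ} (γ : ℝ) (Ω : Set (Euc d)) (u : Euc d → ℝ) : Prop :=
  ContDiffOn ℝ 2 u Ω ∧ ContinuousOn u (closure Ω) ∧
  ∃ M : ℝ, (∀ x ∈ closure Ω, |u x| ≤ M) ∧
    (∀ x ∈ Ω, ‖fderiv ℝ u x‖ ≤ M ∧ ‖iteratedFDeriv ℝ 2 u x‖ ≤ M) ∧
    ∀ x ∈ Ω, ∀ y ∈ Ω, ‖iteratedFDeriv ℝ 2 u x - iteratedFDeriv ℝ 2 u y‖ ≤ M * ‖x - y‖ ^ γ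

/-- A test function in `C_0^∞(Ω̄ \ {σ = 0})`, not vanishing identically in `Ω`. -/
def TestFun {d : ℕ} (Ω : Set (Euc d)) (σ : Euc d → ℝ) (φ : Euc d → ℝ) : Prop :=
  ContDiff ℝ (⊤ : ℕ∞) φ ∧ HasCompactSupport φ ∧
  tsupport φ ⊆ closure Ω \ {x | x ∈ frontier Ω ∧ σ x = 0} ∧
  ∃ x ∈ Ω, φ x ≠ 0

/-- The partial order `(Ω', σ') ⪯ (Ω, σ)` on pairs of domains and boundary parameters. -/
def PrecPair {d : ℕ} (Ω' : Set (Euc d)) (σ' : Euc d → ℝ) (Ω : Set (Euc d))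
    (σ : Euc d → ℝ) : Prop :=
  Ω' ⊆ Ω ∧ (∀ x ∈ frontier Ω' ∩ frontier Ω, σ' x ≤ σ x) ∧
    ∀ x ∈ frontier Ω' ∩ Ω, σ' x = 0

/-- A `μ`-ample–narrow decomposition of `(Ω, ρ)`. -/
def AmpleNarrowDecomp {d : ℕ} (γ ρ μ : ℝ) (Ω : Set (Euc d)) (Ωm Ωp : Set (Euc d))
    (σm σp : Euc d → ℝ) : Prop :=
  ∃ rm Km rp Kp : ℝ,
    UniformSmooth γ rm Km Ωm ∧ UniformSmooth γ rp Kp Ωp ∧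
    SmoothParam γ Km Ωm σm ∧ SmoothParam γ Kp Ωp σp ∧
    PrecPair Ωm σm Ω (fun _ => ρ) ∧ PrecPair Ωp σp Ω (fun _ => ρ) ∧
    Ω = Ωm ∪ Ωp ∧
    limSpecPair γ rm Km Ωm σm ⊆ (fun c : ℝ => (c : EReal)) '' Ico 0 μ ∧
    (μ : EReal) < gpe d Ωp σp ∧
    ∀ x ∈ frontier Ω, max ((frontier Ωp).indicator σp x) ((frontier Ωm).indicator σm x) = ρ

/-- The infinite cylinder `ℝ × ω ⊆ ℝ^{n+1}`. -/
def cylDomain (n : ℕ) (ω : Set (Euc n)) : Set (Euc (n + 1)) :=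
  {p | (show Euc n from WithLp.toLp 2 (fun i : Fin n => p i.succ)) ∈ ω}

/-- The last `n` coordinates of a point of `ℝ^{n+1}`. -/
def tailCoord (n : ℕ) (p : Euc (n + 1)) : Euc n :=
  show Euc n from WithLp.toLp 2 (fun i : Fin n => p i.succ)


lemma line_hasDerivAt {d : ℕ} {u : Euc d → ℝ} {p v : Euc d} {t : ℝ}
    (hu : DifferentiableAt ℝ u (p + t • v)) :
    HasDerivAt (fun t : ℝ => u (p + t • v)) (fderiv ℝ u (p + t • v) v) t := by
  have hline : HasDerivAt (fun t : ℝ => p + t • v) v t := by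
    simpa using (((hasDerivAt_id t).smul_const v).const_add p)
  exact hu.hasFDerivAt.comp_hasDerivAt t hline

lemma secondLine {d : ℕ} {u : Euc d → ℝ} {U : Set (Euc d)} (hU : IsOpen U)
    (hu : ContDiffOn ℝ 2 u U) {p : Euc d} (hp : p ∈ U) (v : Euc d) :
    deriv (deriv (fun t : ℝ => u (p + t • v))) 0 = fderiv ℝ (fderiv ℝ u) p v v := by
  have hV : IsOpen {t : ℝ | p + t • v ∈ U} :=
    hU.preimage (by continuity)
  have h0V : (0 : ℝ) ∈ {t : ℝ | p + t • v ∈ U} := by simp [hp]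
  have hev : deriv (fun t : ℝ => u (p + t • v)) =ᶠ[𝓝 (0:ℝ)]
      fun t => fderiv ℝ u (p + t • v) v := by
    filter_upwards [hV.mem_nhds h0V] with t ht
    exact (line_hasDerivAt (((hu.contDiffAt (hU.mem_nhds ht)).differentiableAt
      (by norm_num)))).deriv
  rw [hev.deriv_eq]
  have hF : DifferentiableAt ℝ (fderiv ℝ u) p :=
    ((hu.contDiffAt (hU.mem_nhds hp)).fderiv_right (m := 1) (by norm_num)).differentiableAt (by norm_num)
  have hline : HasDerivAt (fun t : ℝ => p + t • v) v (0:ℝ) := by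
    simpa using (((hasDerivAt_id (0:ℝ)).smul_const v).const_add p)
  have hcomp : HasDerivAt (fun t : ℝ => fderiv ℝ u (p + t • v))
      (fderiv ℝ (fderiv ℝ u) p v) 0 := by
    have hF' : HasFDerivAt (fderiv ℝ u) (fderiv ℝ (fderiv ℝ u) p) (p + (0:ℝ) • v) := by
      simpa using hF.hasFDerivAt
    simpa [Function.comp_def] using hF'.comp_hasDerivAt 0 hline
  have happ : HasDerivAt (fun t : ℝ => fderiv ℝ u (p + t • v) v)
      (fderiv ℝ (fderiv ℝ u) p v v) 0 := by
    have := (ContinuousLinearMap.apply ℝ ℝ v).hasFDerivAt.comp_hasDerivAt 0 hcomp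
    simpa [Function.comp_def] using this
  exact happ.deriv
lemma lapl_eq_sum (d : ℕ) (u : Euc d → ℝ) (x : Euc d) :
    lapl d u x = ∑ i : Fin d,
      fderiv ℝ (fderiv ℝ u) x (EuclideanSpace.basisFun (Fin d) ℝ i)
        (EuclideanSpace.basisFun (Fin d) ℝ i) := by
  unfold lapl
  refine Finset.sum_congr rfl fun i _ => ?_
  rw [iteratedFDeriv_two_apply]
  simp

lemma lapl_const (d : ℕ) (c : ℝ) (x : Euc d) : lapl d (fun _ => c) x = 0 := by
  unfold lapl
  refine Finset.sum_eq_zero fun i _ => ?_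
  rw [iteratedFDeriv_const_of_ne (by norm_num)]
  simp

lemma lapl_scale {d : ℕ} {u : Euc d → ℝ} {U : Set (Euc d)} (hU : IsOpen U)
    (hu : ContDiffOn ℝ 2 u U) {x z : Euc d} {s : ℝ} (h : x + s • z ∈ U) :
    lapl d (fun y => u (x + s • y)) z = s ^ 2 * lapl d u (x + s • z) := by
  have hA : ContDiff ℝ 2 (fun y : Euc d => x + s • y) :=
    contDiff_const.add (contDiff_id.const_smul s)
  have hV : IsOpen ((fun y : Euc d => x + s • y) ⁻¹' U) := hU.preimage hA.continuous
  have hzV : z ∈ (fun y : Euc d => x + s • y) ⁻¹' U := h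
  have hψ : ContDiffOn ℝ 2 (fun y : Euc d => u (x + s • y))
      ((fun y : Euc d => x + s • y) ⁻¹' U) :=
    hu.comp hA.contDiffOn (fun y hy => hy)
  rw [lapl_eq_sum, lapl_eq_sum, Finset.mul_sum]
  refine Finset.sum_congr rfl fun i _ => ?_
  set e := EuclideanSpace.basisFun (Fin d) ℝ i
  have h1 : deriv (deriv (fun t : ℝ => u ((x + s • z) + t • (s • e)))) 0
      = fderiv ℝ (fderiv ℝ u) (x + s • z) (s • e) (s • e) :=
    secondLine hU hu h (s • e)
  have h2 : deriv (deriv (fun t : ℝ => (fun y : Euc d => u (x + s • y)) (z + t • e))) 0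
      = fderiv ℝ (fderiv ℝ (fun y : Euc d => u (x + s • y))) z e e :=
    secondLine hV hψ hzV e
  have hfun : (fun t : ℝ => (fun y : Euc d => u (x + s • y)) (z + t • e))
      = fun t : ℝ => u ((x + s • z) + t • (s • e)) := by
    funext t
    show u (x + s • (z + t • e)) = _
    congr 1
    rw [smul_add, smul_smul, smul_smul, mul_comm]
    abel
  rw [hfun] at h2
  rw [← h2, h1]
  simp only [_root_.map_smul, ContinuousLinearMap.smul_apply, smul_eq_mul]
  ring

lemma cosprod_contDiff {d : ℕ} (α : ℝ) (x : Euc d) :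
    ContDiff ℝ 2 (fun y : Euc d => ∏ i : Fin d, Real.cos (α * (y i - x i))) := by
  apply contDiff_prod
  intro i _
  exact Real.contDiff_cos.comp
    (contDiff_const.mul (((EuclideanSpace.proj i : Euc d →L[ℝ] ℝ).contDiff).sub contDiff_const))

lemma cosline_eq {d : ℕ} (α : ℝ) (x y : Euc d) (i : Fin d) :
    (fun t : ℝ => ∏ j : Fin d,
        Real.cos (α * ((y + t • EuclideanSpace.basisFun (Fin d) ℝ i) j - x j)))
      = fun t : ℝ => Real.cos (α * ((y i - x i) + t)) *
          ∏ j ∈ Finset.univ.erase i, Real.cos (α * (y j - x j)) := by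
  funext t
  rw [← Finset.mul_prod_erase Finset.univ _ (Finset.mem_univ i)]
  congr 1
  · congr 1
    have : (y + t • EuclideanSpace.basisFun (Fin d) ℝ i) i = y i + t := by
      simp [EuclideanSpace.basisFun_apply, PiLp.add_apply, PiLp.smul_apply,
        EuclideanSpace.single_apply]
    rw [this]; ring
  · refine Finset.prod_congr rfl fun j hj => ?_
    have hji : j ≠ i := Finset.ne_of_mem_erase hj
    have : (y + t • EuclideanSpace.basisFun (Fin d) ℝ i) j = y j := by
      simp [EuclideanSpace.basisFun_apply, PiLp.add_apply, PiLp.smul_apply,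
        EuclideanSpace.single_apply, hji]
    rw [this]

lemma cos_second_deriv (α b C : ℝ) :
    deriv (deriv (fun t : ℝ => Real.cos (α * (b + t)) * C)) 0
      = -(α ^ 2) * (Real.cos (α * b) * C) := by
  have hinner : ∀ t : ℝ, HasDerivAt (fun t : ℝ => α * (b + t)) α t := by
    intro t
    simpa using ((hasDerivAt_id t).const_add b).const_mul α
  have hd1 : deriv (fun t : ℝ => Real.cos (α * (b + t)) * C)
      = fun t : ℝ => -Real.sin (α * (b + t)) * α * C := by
    funext t
    exact (((hinner t).cos).mul_const C).deriv
  rw [hd1]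
  have h2 : HasDerivAt (fun t : ℝ => -Real.sin (α * (b + t)) * α * C)
      (-(Real.cos (α * (b + 0)) * α) * α * C) 0 :=
    ((((hinner 0).sin).neg).mul_const α).mul_const C
  rw [h2.deriv]
  ring_nf

lemma lapl_cosprod {d : ℕ} (α : ℝ) (x y : Euc d) :
    lapl d (fun y : Euc d => ∏ i : Fin d, Real.cos (α * (y i - x i))) y
      = -((d : ℝ) * α ^ 2) * ∏ i : Fin d, Real.cos (α * (y i - x i)) := by
  rw [lapl_eq_sum]
  have hw := cosprod_contDiff α x
  have key : ∀ i : Fin d,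
      fderiv ℝ (fderiv ℝ (fun y : Euc d => ∏ i : Fin d, Real.cos (α * (y i - x i)))) y
        (EuclideanSpace.basisFun (Fin d) ℝ i) (EuclideanSpace.basisFun (Fin d) ℝ i)
      = -(α ^ 2) * ∏ i : Fin d, Real.cos (α * (y i - x i)) := by
    intro i
    rw [← secondLine isOpen_univ hw.contDiffOn (mem_univ y)]
    have := cosline_eq α x y i
    rw [show (fun t : ℝ => (fun y : Euc d => ∏ i : Fin d, Real.cos (α * (y i - x i)))
        (y + t • EuclideanSpace.basisFun (Fin d) ℝ i))
      = fun t : ℝ => Real.cos (α * ((y i - x i) + t)) *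
          ∏ j ∈ Finset.univ.erase i, Real.cos (α * (y j - x j)) from this]
    rw [cos_second_deriv]
    congr 1
    exact Finset.mul_prod_erase Finset.univ
      (fun j => Real.cos (α * (y j - x j))) (Finset.mem_univ i)
  rw [Finset.sum_congr rfl (fun i _ => key i)]
  rw [Finset.sum_const]
  simp [Finset.card_univ]
  ring

lemma second_deriv_nonneg_of_localmin {h : ℝ → ℝ} {V : Set ℝ} (hV : IsOpen V)
    (h0V : (0:ℝ) ∈ V) (hh : ContDiffOn ℝ 2 h V) (hmin : IsLocalMin h 0) :
    0 ≤ deriv (deriv h) 0 := by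
  by_contra hneg
  push_neg at hneg
  have hh' : ContDiffOn ℝ 1 (deriv h) V := hh.deriv_of_isOpen hV (le_refl 2)
  have hdiff' : DifferentiableAt ℝ (deriv h) 0 :=
    (hh'.contDiffAt (hV.mem_nhds h0V)).differentiableAt (by norm_num)
  have h'0 : deriv h 0 = 0 := hmin.deriv_eq_zero
  have hslope : Tendsto (slope (deriv h) 0) (𝓝[>] (0:ℝ)) (𝓝 (deriv (deriv h) 0)) :=
    (hasDerivAt_iff_tendsto_slope.mp hdiff'.hasDerivAt).mono_left
      (nhdsWithin_mono _ (fun t ht => ne_of_gt ht))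
  have heev : ∀ᶠ t in 𝓝[>] (0:ℝ), slope (deriv h) 0 t < 0 :=
    hslope.eventually_lt_const hneg
  obtain ⟨ε₃, hε₃pos, hε₃⟩ : ∃ u ∈ Ioi (0:ℝ), Ioo 0 u ⊆ {t | slope (deriv h) 0 t < 0} :=
    mem_nhdsGT_iff_exists_Ioo_subset.mp heev
  obtain ⟨ε₁, hε₁pos, hε₁⟩ := Metric.isOpen_iff.mp hV 0 h0V
  obtain ⟨ε₂, hε₂pos, hε₂⟩ := Metric.eventually_nhds_iff.mp hmin
  have hε₃pos' : (0:ℝ) < ε₃ := hε₃pos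
  set t := min (min ε₁ ε₂) ε₃ / 2 with ht
  have htpos : 0 < t := by positivity
  have htV : Icc (0:ℝ) t ⊆ V := by
    intro y hy
    apply hε₁
    rw [mem_ball, dist_zero_right, Real.norm_eq_abs, abs_of_nonneg hy.1]
    calc y ≤ t := hy.2
    _ < min ε₁ ε₂ := by
        rw [ht]
        have h1 := lt_min (lt_min hε₁pos hε₂pos) hε₃pos'
        have h2 := min_le_left (min ε₁ ε₂) ε₃
        linarith
    _ ≤ ε₁ := min_le_left _ _
  have hcont : ContinuousOn h (Icc 0 t) := (hh.continuousOn).mono htV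
  have hderiv : ∀ ξ ∈ Ioo (0:ℝ) t, HasDerivAt h (deriv h ξ) ξ := by
    intro ξ hξ
    have : ξ ∈ V := htV ⟨le_of_lt hξ.1, le_of_lt hξ.2⟩
    exact ((hh.contDiffAt (hV.mem_nhds this)).differentiableAt
      (by norm_num)).hasDerivAt
  obtain ⟨ξ, hξIoo, hξeq⟩ := exists_hasDerivAt_eq_slope h (deriv h) htpos hcont hderiv
  have hξneg : deriv h ξ < 0 := by
    have hs : slope (deriv h) 0 ξ < 0 := hε₃ ⟨hξIoo.1, lt_of_lt_of_le hξIoo.2 (by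
      rw [ht]
      have h2 := min_le_right (min ε₁ ε₂) ε₃
      linarith)⟩
    rw [slope_def_field, h'0, sub_zero, sub_zero] at hs
    have hξp := hξIoo.1
    rcases div_neg_iff.mp hs with ⟨_, hc⟩ | ⟨hc, _⟩
    · linarith
    · linarith
  have hht : h t < h 0 := by
    rw [hξeq, sub_zero] at hξneg
    have := div_neg_iff.mp hξneg
    rcases this with ⟨_, h2⟩ | ⟨h1, _⟩
    · linarith
    · linarith
  have : h 0 ≤ h t := hε₂ (by
    rw [dist_zero_right, Real.norm_eq_abs, abs_of_pos htpos]
    calc t < min ε₁ ε₂ := by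
          rw [ht]
          have h1 := lt_min (lt_min hε₁pos hε₂pos) hε₃pos'
          have h2 := min_le_left (min ε₁ ε₂) ε₃
          linarith
    _ ≤ ε₂ := min_le_right _ _)
  linarith

lemma lapl_sub_smul {d : ℕ} {U : Set (Euc d)} (hU : IsOpen U) {φ w : Euc d → ℝ}
    (hφ : ContDiffOn ℝ 2 φ U) (hw : ContDiff ℝ 2 w) {y : Euc d} (hy : y ∈ U) (t : ℝ) :
    lapl d (fun p => φ p - t * w p) y = lapl d φ y - t * lapl d w y := by
  unfold lapl
  rw [Finset.mul_sum, ← Finset.sum_sub_distrib]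
  refine Finset.sum_congr rfl fun i _ => ?_
  set m : Fin 2 → Euc d := ![EuclideanSpace.basisFun (Fin d) ℝ i,
    EuclideanSpace.basisFun (Fin d) ℝ i]
  have hu : UniqueDiffOn ℝ U := hU.uniqueDiffOn
  have hadd : (fun p => φ p - t * w p) = φ + (-t) • w := by
    funext p; simp [Pi.add_apply, Pi.smul_apply, smul_eq_mul]; ring
  have hsw : ContDiffOn ℝ 2 ((-t) • w) U := (hw.const_smul (-t)).contDiffOn
  have e1 : iteratedFDeriv ℝ 2 (fun p => φ p - t * w p) y m
      = iteratedFDerivWithin ℝ 2 (φ + (-t) • w) U y m := by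
    rw [hadd, iteratedFDerivWithin_of_isOpen 2 hU hy]
  have e2 : iteratedFDerivWithin ℝ 2 (φ + (-t) • w) U y
      = iteratedFDerivWithin ℝ 2 φ U y + iteratedFDerivWithin ℝ 2 ((-t) • w) U y :=
    iteratedFDerivWithin_add_apply (hφ y hy) (hsw y hy) hu hy
  have e3 : iteratedFDerivWithin ℝ 2 ((-t) • w) U y
      = (-t) • iteratedFDerivWithin ℝ 2 w U y :=
    iteratedFDerivWithin_const_smul_apply (hw.contDiffOn y hy) hu hy
  rw [e1, e2, e3, ContinuousMultilinearMap.add_apply, ContinuousMultilinearMap.smul_apply,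
    iteratedFDerivWithin_of_isOpen 2 hU hy, iteratedFDerivWithin_of_isOpen 2 hU hy]
  simp [smul_eq_mul]
  ring

set_option maxHeartbeats 1000000 in
lemma no_big_ball_supersol {d : ℕ} (hd : 0 < d) {U : Set (Euc d)} (hU : IsOpen U)
    {φ : Euc d → ℝ} (hφ : ContDiffOn ℝ 2 φ U) (hpos : ∀ p ∈ U, 0 < φ p)
    {c : ℝ} (hc : 0 < c) (hsup : ∀ p ∈ U, c * φ p ≤ -(lapl d φ p))
    {x : Euc d} {s : ℝ} (hball : ball x s ⊆ U)
    (hbig : Real.sqrt d * (Real.pi / (2 * Real.sqrt (c / (2 * d)))) < s) : False := by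
  have hdR : (0:ℝ) < d := by exact_mod_cast hd
  set α := Real.sqrt (c / (2 * d)) with hα
  have hαpos : 0 < α := Real.sqrt_pos.mpr (by positivity)
  have hα2 : (d:ℝ) * α ^ 2 = c / 2 := by
    rw [hα, Real.sq_sqrt (by positivity)]
    field_simp
  set L := Real.pi / (2 * α) with hL
  have hLpos : 0 < L := by positivity
  have hαL : α * L = Real.pi / 2 := by rw [hL]; field_simp
  set w := fun y : Euc d => ∏ i : Fin d, Real.cos (α * (y i - x i)) with hwdef
  have hwcd : ContDiff ℝ 2 w := cosprod_contDiff α x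
  set Q := {y : Euc d | ∀ i, |y i - x i| ≤ L} with hQdef
  -- Q inside the ball
  have hQball : Q ⊆ ball x s := by
    intro y hy
    rw [mem_ball, dist_eq_norm]
    have hnorm : ‖y - x‖ = Real.sqrt (∑ i : Fin d, ‖(y - x) i‖ ^ 2) :=
      EuclideanSpace.norm_eq (y - x)
    rw [hnorm]
    have hle : ∑ i : Fin d, ‖(y - x) i‖ ^ 2 ≤ (d : ℝ) * L ^ 2 := by
      calc ∑ i : Fin d, ‖(y - x) i‖ ^ 2 ≤ ∑ _i : Fin d, L ^ 2 := by
            refine Finset.sum_le_sum fun i _ => ?_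
            have h1 : ‖(y - x) i‖ = |y i - x i| := by
              simp [Real.norm_eq_abs]
            rw [h1]
            have := hy i
            nlinarith [abs_nonneg (y i - x i)]
      _ = (d : ℝ) * L ^ 2 := by
            rw [Finset.sum_const, Finset.card_univ, nsmul_eq_mul]
            simp
    calc Real.sqrt (∑ i : Fin d, ‖(y - x) i‖ ^ 2) ≤ Real.sqrt ((d:ℝ) * L ^ 2) :=
          Real.sqrt_le_sqrt hle
    _ = Real.sqrt d * L := by
        rw [Real.sqrt_mul (by positivity), Real.sqrt_sq hLpos.le]
    _ < s := by rw [hL]; exact hbig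
  have hQU : Q ⊆ U := hQball.trans hball
  have hxQ : x ∈ Q := fun i => by simp [hLpos.le]
  have hQclosed : IsClosed Q := by
    have : Q = ⋂ i : Fin d, {y : Euc d | |y i - x i| ≤ L} := by
      ext y; simp [hQdef, mem_iInter]
    rw [this]
    refine isClosed_iInter fun i => isClosed_le ?_ continuous_const
    exact (((EuclideanSpace.proj i : Euc d →L[ℝ] ℝ).continuous).sub continuous_const).abs
  have hQcompact : IsCompact Q :=
    (isCompact_closedBall x s).of_isClosed_subset hQclosed
      (hQball.trans ball_subset_closedBall)
  -- w between 0 and 1 on Q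
  have hwQ : ∀ y ∈ Q, 0 ≤ w y ∧ w y ≤ 1 := by
    intro y hy
    have hfac : ∀ i : Fin d, 0 ≤ Real.cos (α * (y i - x i)) ∧
        Real.cos (α * (y i - x i)) ≤ 1 := by
      intro i
      constructor
      · apply Real.cos_nonneg_of_mem_Icc
        have h1 : |α * (y i - x i)| ≤ Real.pi / 2 := by
          rw [abs_mul, abs_of_pos hαpos]
          calc α * |y i - x i| ≤ α * L := by
                have := hy i; nlinarith
          _ = Real.pi / 2 := hαL
        constructor
        · linarith [neg_abs_le (α * (y i - x i))]
        · linarith [le_abs_self (α * (y i - x i))]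
      · exact Real.cos_le_one _
    constructor
    · exact Finset.prod_nonneg fun i _ => (hfac i).1
    · exact Finset.prod_le_one (fun i _ => (hfac i).1) (fun i _ => (hfac i).2)
  have hwx : w x = 1 := by simp [hwdef]
  -- minimum of φ on Q
  have hφc : ContinuousOn φ Q := hφ.continuousOn.mono hQU
  obtain ⟨z₀, hz₀Q, hz₀⟩ := hQcompact.exists_isMinOn ⟨x, hxQ⟩ hφc
  set δ := φ z₀ with hδdef
  have hδpos : 0 < δ := hpos z₀ (hQU hz₀Q)
  have hδle : ∀ y ∈ Q, δ ≤ φ y := fun y hy => hz₀ hy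
  -- the touching constant
  set T := {t : ℝ | 0 ≤ t ∧ ∀ y ∈ Q, t * w y ≤ φ y} with hTdef
  have hδT : δ ∈ T := by
    refine ⟨hδpos.le, fun y hy => ?_⟩
    have h1 := hwQ y hy
    have h2 := hδle y hy
    nlinarith
  have hTbdd : BddAbove T := by
    refine ⟨φ x, fun t ht => ?_⟩
    have := ht.2 x hxQ
    rw [hwx, mul_one] at this
    exact this
  set tstar := sSup T with htdef
  have htstar_ge : δ ≤ tstar := le_csSup hTbdd hδT
  have htstar_pos : 0 < tstar := lt_of_lt_of_le hδpos htstar_ge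
  have htstar : ∀ y ∈ Q, tstar * w y ≤ φ y := by
    intro y hy
    rcases eq_or_lt_of_le (hwQ y hy).1 with h0 | hwpos
    · rw [← h0, mul_zero]; exact (hpos y (hQU hy)).le
    · have h1 : tstar ≤ φ y / w y :=
        csSup_le ⟨δ, hδT⟩ (fun t ht => (le_div_iff₀ hwpos).mpr (ht.2 y hy))
      exact (le_div_iff₀ hwpos).mp h1
  -- the touching point
  set g := fun y : Euc d => φ y - tstar * w y with hgdef
  have hgc : ContinuousOn g Q := hφc.sub ((continuous_const.mul hwcd.continuous).continuousOn)
  obtain ⟨y₀, hy₀Q, hy₀min⟩ := hQcompact.exists_isMinOn ⟨x, hxQ⟩ hgc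
  have hy₀U : y₀ ∈ U := hQU hy₀Q
  have hg0 : g y₀ = 0 := by
    by_contra hne
    have hgpos : 0 < g y₀ := by
      have := htstar y₀ hy₀Q
      rcases lt_or_eq_of_le (show 0 ≤ g y₀ by simp [hgdef]; linarith) with h | h
      · exact h
      · exact absurd h.symm hne
    set η := g y₀ with hη
    have hmem : tstar + η ∈ T := by
      refine ⟨by linarith, fun y hy => ?_⟩
      have hA : tstar * w y ≤ φ y - η := by
        have h2 : g y₀ ≤ g y := hy₀min hy
        have h3 : φ y₀ - tstar * w y₀ ≤ φ y - tstar * w y := h2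
        have hη2 : η = φ y₀ - tstar * w y₀ := rfl
        linarith
      have hB : η * w y ≤ η := by
        have := (hwQ y hy).2
        nlinarith
      nlinarith
    have hfin := le_csSup hTbdd hmem
    have : tstar + η ≤ tstar := hfin
    linarith
  have hφy₀ : φ y₀ = tstar * w y₀ := by
    simp only [hgdef] at hg0; linarith
  have hwy₀pos : 0 < w y₀ := by
    rcases eq_or_lt_of_le (hwQ y₀ hy₀Q).1 with h0 | h
    · exfalso
      have := hpos y₀ hy₀U
      rw [hφy₀, ← h0, mul_zero] at this
      exact lt_irrefl 0 this
    · exact h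
  -- y₀ is interior to the cube
  have hy₀int : ∀ i : Fin d, |y₀ i - x i| < L := by
    intro i
    rcases lt_or_eq_of_le (hy₀Q i) with h | h
    · exact h
    · exfalso
      have hzero : Real.cos (α * (y₀ i - x i)) = 0 := by
        have : |α * (y₀ i - x i)| = Real.pi / 2 := by
          rw [abs_mul, abs_of_pos hαpos, h, hαL]
        rw [← Real.cos_abs, this, Real.cos_pi_div_two]
      have : w y₀ = 0 :=
        Finset.prod_eq_zero (Finset.mem_univ i) hzero
      rw [this] at hwy₀pos
      exact lt_irrefl 0 hwy₀pos
  -- local minimum of g at y₀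
  have hQoopen : IsOpen {y : Euc d | ∀ i, |y i - x i| < L} := by
    have : {y : Euc d | ∀ i, |y i - x i| < L} = ⋂ i : Fin d, {y : Euc d | |y i - x i| < L} := by
      ext y; simp [mem_iInter]
    rw [this]
    refine isOpen_iInter_of_finite fun i => isOpen_lt ?_ continuous_const
    exact (((EuclideanSpace.proj i : Euc d →L[ℝ] ℝ).continuous).sub continuous_const).abs
  have hlocmin : IsLocalMin g y₀ := by
    refine Filter.eventually_iff.mpr (mem_of_superset (hQoopen.mem_nhds hy₀int) ?_)
    intro y hy
    exact hy₀min (fun i => (hy i).le)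
  have hgU : ContDiffOn ℝ 2 g U :=
    hφ.sub ((contDiff_const.mul hwcd).contDiffOn)
  -- second derivative test
  have hlapl_nonneg : 0 ≤ lapl d g y₀ := by
    rw [lapl_eq_sum]
    refine Finset.sum_nonneg fun i _ => ?_
    set e := EuclideanSpace.basisFun (Fin d) ℝ i
    rw [← secondLine hU hgU hy₀U e]
    set V := {t : ℝ | y₀ + t • e ∈ U} with hVdef
    have hVopen : IsOpen V :=
      hU.preimage (continuous_const.add (continuous_id.smul continuous_const))
    have h0V : (0:ℝ) ∈ V := by simp [hVdef, hy₀U]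
    have hlinecd : ContDiffOn ℝ 2 (fun t : ℝ => g (y₀ + t • e)) V :=
      hgU.comp (contDiff_const.add (contDiff_id.smul contDiff_const)).contDiffOn (fun t ht => ht)
    have hlinemin : IsLocalMin (fun t : ℝ => g (y₀ + t • e)) 0 := by
      have htm : Tendsto (fun t : ℝ => y₀ + t • e) (𝓝 0) (𝓝 y₀) := by
        have hcont : Continuous (fun t : ℝ => y₀ + t • e) :=
          continuous_const.add (continuous_id.smul continuous_const)
        have h := hcont.tendsto 0
        simpa using h
      have hev := htm.eventually hlocmin
      refine hev.mono fun t ht => ?_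
      simpa using ht
    exact second_deriv_nonneg_of_localmin hVopen h0V hlinecd hlinemin
  -- conclusion
  have hsplit : lapl d g y₀ = lapl d φ y₀ - tstar * lapl d w y₀ :=
    lapl_sub_smul hU hφ hwcd hy₀U tstar
  have hlaplw : lapl d w y₀ = -((d : ℝ) * α ^ 2) * w y₀ := lapl_cosprod α x y₀
  have hφsup := hsup y₀ hy₀U
  rw [hsplit, hlaplw, hα2] at hlapl_nonneg
  have hprod : 0 < c / 2 * (tstar * w y₀) :=
    mul_pos (by linarith) (mul_pos htstar_pos hwy₀pos)
  nlinarith [hlapl_nonneg, hφsup, hφy₀, hprod]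

lemma nonneg_on_closure {d : ℕ} {Ω : Set (Euc d)} {φ : Euc d → ℝ}
    (hcont : ContinuousOn φ (closure Ω)) (hpos : ∀ x ∈ Ω, 0 < φ x) :
    ∀ z ∈ closure Ω, 0 ≤ φ z := by
  intro z hz
  haveI := mem_closure_iff_nhdsWithin_neBot.mp hz
  have h1 : ContinuousWithinAt φ Ω z := (hcont z hz).mono subset_closure
  exact ge_of_tendsto h1 (eventually_nhdsWithin_of_forall fun y hy => (hpos y hy).le)

lemma coe_ennreal_eq_toReal {x : ℝ≥0∞} (h : x ≠ ⊤) :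
    (x : EReal) = ((x.toReal : ℝ) : EReal) := by
  lift x to NNReal using h
  simp [EReal.coe_nnreal_eq_coe_real]

lemma one_admissible_ball {d : ℕ} :
    GPEAdmissible d (fun _ => 0) (ball (0 : Euc d) 1) (fun _ => 0) 0 := by
  refine ⟨fun _ => 1, contDiffOn_const, continuousOn_const, fun _ _ => one_pos, ?_, ?_⟩
  · intro x hx
    exact ⟨fun _ => zero_le_one, fun v hv a ha => by norm_num⟩
  · intro x hx
    rw [lapl_const]
    norm_num

lemma one_admissible_general {d : ℕ} {q : Euc d → ℝ} {Ω : Set (Euc d)} {σ : Euc d → ℝ}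
    (hσ : ∀ x ∈ frontier Ω, σ x ∈ Icc (0 : ℝ) 1) (hbdd : BddAbove (q '' Ω)) :
    GPEAdmissible d q Ω σ (-sSup (q '' Ω)) := by
  refine ⟨fun _ => 1, contDiffOn_const, continuousOn_const, fun _ _ => one_pos, ?_, ?_⟩
  · intro x hx
    refine ⟨fun _ => zero_le_one, fun v hv a ha => ?_⟩
    have ha0 : a = 0 := by
      have h1 : Tendsto (fun t : ℝ => ((1 : ℝ) - 1) / t) (𝓝[>] (0 : ℝ)) (𝓝 a) := ha
      have h2 : (fun t : ℝ => ((1 : ℝ) - 1) / t) = fun _ => (0 : ℝ) := by funext t; simp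
      rw [h2] at h1
      exact tendsto_nhds_unique h1 tendsto_const_nhds
    rw [ha0]
    have h3 := (hσ x hx).2
    show (0:ℝ) ≤ σ x * 0 + (1 - σ x) * 1
    nlinarith
  · intro x hx
    rw [lapl_const]
    have h1 : q x ≤ sSup (q '' Ω) := le_csSup hbdd (mem_image_of_mem q hx)
    show -sSup (q '' Ω) * 1 ≤ -0 - q x * 1
    nlinarith

lemma scaled_admissible {d : ℕ} {q : Euc d → ℝ} {Ω : Set (Euc d)} {σ : Euc d → ℝ} {μ : ℝ}
    (hΩopen : IsOpen Ω) (hadm : GPEAdmissible d q Ω σ μ) {x : Euc d} {s : ℝ} (hs : 0 < s)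
    (hball : ball x s ⊆ Ω) (hbdd : BddBelow (q '' Ω)) :
    GPEAdmissible d (fun _ => 0) (ball (0 : Euc d) 1) (fun _ => 0)
      (s ^ 2 * (μ + sInf (q '' Ω))) := by
  obtain ⟨φ, hφcd, hφcont, hφpos, hφbge, hφineq⟩ := hadm
  have hAcd : ContDiff ℝ 2 (fun y : Euc d => x + s • y) :=
    contDiff_const.add (contDiff_id.const_smul s)
  have hmaps : ∀ y ∈ ball (0 : Euc d) 1, x + s • y ∈ ball x s := by
    intro y hy
    rw [mem_ball, dist_eq_norm] at hy ⊢
    have h1 : x + s • y - x = s • y := by abel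
    rw [h1, norm_smul, Real.norm_eq_abs, abs_of_pos hs]
    have h2 : ‖y - 0‖ = ‖y‖ := by simp
    rw [h2] at hy
    nlinarith [norm_nonneg y]
  have hclos : ∀ y ∈ closure (ball (0 : Euc d) 1), x + s • y ∈ closure Ω := by
    intro y hy
    have h1 : (fun y : Euc d => x + s • y) '' closure (ball (0 : Euc d) 1)
        ⊆ closure ((fun y : Euc d => x + s • y) '' ball (0 : Euc d) 1) :=
      image_closure_subset_closure_image hAcd.continuous
    have h2 : x + s • y ∈ closure ((fun y : Euc d => x + s • y) '' ball (0 : Euc d) 1) :=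
      h1 (mem_image_of_mem _ hy)
    refine closure_mono ?_ h2
    rintro _ ⟨y', hy', rfl⟩
    exact hball (hmaps y' hy')
  refine ⟨fun y => φ (x + s • y), ?_, ?_, ?_, ?_, ?_⟩
  · exact hφcd.comp hAcd.contDiffOn (fun y hy => hball (hmaps y hy))
  · exact hφcont.comp hAcd.continuous.continuousOn (fun y hy => hclos y hy)
  · exact fun y hy => hφpos _ (hball (hmaps y hy))
  · intro z hz
    have hnn : 0 ≤ φ (x + s • z) :=
      nonneg_on_closure hφcont hφpos _ (hclos z (frontier_subset_closure hz))
    refine ⟨fun _ => hnn, fun v hv a ha => ?_⟩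
    simpa using hnn
  · intro y hy
    have hp : x + s • y ∈ Ω := hball (hmaps y hy)
    have hlapl : lapl d (fun y => φ (x + s • y)) y = s ^ 2 * lapl d φ (x + s • y) :=
      lapl_scale hΩopen hφcd hp
    have hineq := hφineq _ hp
    have hmle : sInf (q '' Ω) ≤ q (x + s • y) := csInf_le hbdd (mem_image_of_mem q hp)
    rw [hlapl]
    have hφp := hφpos _ hp
    have h1 : (μ + q (x + s • y)) * φ (x + s • y) ≤ -(lapl d φ (x + s • y)) := by nlinarith
    have h2 : (μ + sInf (q '' Ω)) * φ (x + s • y) ≤ (μ + q (x + s • y)) * φ (x + s • y) := by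
      nlinarith
    have h3 := mul_le_mul_of_nonneg_left (h2.trans h1) (sq_nonneg s)
    show s ^ 2 * (μ + sInf (q '' Ω)) * φ (x + s • y)
      ≤ -(s ^ 2 * lapl d φ (x + s • y)) - 0 * φ (x + s • y)
    nlinarith [h3]

/-- Proposition 2.1(ii): for `L = Δ + q`,
`−sup_Ω q ≤ λ(−L, Ω, σ) ≤ −inf_Ω q + λ(B₁, 0) R_in^{−2}`. -/
theorem gpe_trivial_bounds {d : ℕ} (γ r K : ℝ) (Ω : Set (Euc d)) (σ q : Euc d → ℝ)
    (hΩopen : IsOpen Ω) (hΩconn : IsConnected Ω) (hΩ : UniformSmooth γ r K Ω)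
    (hσ : SmoothParam γ K Ω σ) (hq : BddHolderOn γ q Ω) :
    ((-sSup (q '' Ω) : ℝ) : EReal) ≤ gpeOp d q Ω σ ∧
      gpeOp d q Ω σ ≤ ((-sInf (q '' Ω) : ℝ) : EReal) +
        gpe d (ball (0 : Euc d) 1) (fun _ => 0) * (((inradius Ω)⁻¹ ^ 2 : ℝ≥0∞) : EReal) := by
  obtain ⟨x₀, hx₀⟩ := hΩconn.nonempty
  obtain ⟨C, hC1, hC2⟩ := hq
  have hbddA : BddAbove (q '' Ω) := ⟨C, by rintro _ ⟨y, hy, rfl⟩; exact (abs_le.mp (hC1 y hy)).2⟩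
  have hbddB : BddBelow (q '' Ω) := ⟨-C, by rintro _ ⟨y, hy, rfl⟩; exact (abs_le.mp (hC1 y hy)).1⟩
  set m := sInf (q '' Ω) with hm
  set S := gpe d (ball (0 : Euc d) 1) (fun _ => 0) with hSdef
  have hS0 : (0 : EReal) ≤ S := by
    rw [hSdef]; unfold gpe gpeOp
    exact le_sSup ⟨0, one_admissible_ball, EReal.coe_zero⟩
  constructor
  · unfold gpeOp
    exact le_sSup ⟨-sSup (q '' Ω), one_admissible_general hσ.1 hbddA, rfl⟩
  · unfold gpeOp
    apply sSup_le
    rintro l ⟨μ, hμ, rfl⟩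
    simp only [mem_setOf_eq] at hμ
    show ((μ : ℝ) : EReal) ≤ ((-m : ℝ) : EReal) +
      S * (((inradius Ω)⁻¹ ^ 2 : ℝ≥0∞) : EReal)
    set c := μ + m with hc
    by_cases hcle : c ≤ 0
    · calc ((μ : ℝ) : EReal) ≤ ((-m : ℝ) : EReal) := EReal.coe_le_coe_iff.mpr (by linarith)
      _ = ((-m : ℝ) : EReal) + 0 := (add_zero _).symm
      _ ≤ _ := add_le_add le_rfl (mul_nonneg hS0 (EReal.coe_ennreal_nonneg _))
    · push_neg at hcle
      obtain ⟨φ, hφcd, hφcont, hφpos, hφbge, hφineq⟩ := id hμ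
      have hsupc : ∀ p ∈ Ω, c * φ p ≤ -(lapl d φ p) := by
        intro p hp
        have h1 := hφineq p hp
        have h2 : m ≤ q p := csInf_le hbddB (mem_image_of_mem q hp)
        nlinarith [hφpos p hp]
      rcases Nat.eq_zero_or_pos d with hd0 | hdpos
      · exfalso
        subst hd0
        have h1 := hsupc x₀ hx₀
        have hz : lapl 0 φ x₀ = 0 := by simp [lapl]
        rw [hz] at h1
        nlinarith [hφpos x₀ hx₀]
      rcases eq_or_ne (inradius Ω) ⊤ with hRtop | hRne
      · exfalso
        set B := Real.sqrt d * (Real.pi / (2 * Real.sqrt (c / (2 * d)))) with hB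
        have hBpos : 0 ≤ B := by positivity
        have hlt : (ENNReal.ofReal (B + 1)) < inradius Ω := by
          rw [hRtop]; exact ENNReal.ofReal_lt_top
        unfold inradius at hlt
        simp only [lt_iSup_iff] at hlt
        obtain ⟨y, sn, hsub, hlt'⟩ := hlt
        have hbs : B + 1 < (sn : ℝ) := by
          have h3 := (ENNReal.ofReal_lt_iff_lt_toReal (by linarith) ENNReal.coe_ne_top).mp hlt'
          simpa using h3
        exact no_big_ball_supersol hdpos hΩopen hφcd hφpos hcle hsupc hsub (by linarith)
      · have hRpos : 0 < inradius Ω := by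
          obtain ⟨ε, hεpos, hεsub⟩ := Metric.isOpen_iff.mp hΩopen x₀ hx₀
          have h1 : (ε.toNNReal : ℝ≥0∞) ≤ inradius Ω := by
            apply le_iSup_of_le x₀
            apply le_iSup_of_le ε.toNNReal
            refine le_iSup_of_le ?_ le_rfl
            rw [Real.coe_toNNReal ε hεpos.le]; exact hεsub
          calc (0 : ℝ≥0∞) < (ε.toNNReal : ℝ≥0∞) := by
                exact_mod_cast ENNReal.coe_pos.mpr (Real.toNNReal_pos.mpr hεpos)
          _ ≤ _ := h1
        set Rr := (inradius Ω).toReal with hRr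
        have hRrpos : 0 < Rr := ENNReal.toReal_pos (ne_of_gt hRpos) hRne
        have hkey : ∀ b ∈ Ioo (0 : ℝ) Rr, ((b ^ 2 * c : ℝ) : EReal) ≤ S := by
          intro b hb
          have hlt : ENNReal.ofReal b < inradius Ω := by
            rw [← ENNReal.ofReal_toReal hRne]
            exact (ENNReal.ofReal_lt_ofReal_iff hRrpos).mpr hb.2
          unfold inradius at hlt
          simp only [lt_iSup_iff] at hlt
          obtain ⟨y, sn, hsub, hlt'⟩ := hlt
          have hbs : b < (sn : ℝ) := by
            have h3 := (ENNReal.ofReal_lt_iff_lt_toReal hb.1.le ENNReal.coe_ne_top).mp hlt'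
            simpa using h3
          have hadm := scaled_admissible hΩopen hμ (show (0 : ℝ) < (sn : ℝ) by linarith [hb.1])
            hsub hbddB
          have hle : ((((sn : ℝ)) ^ 2 * (μ + m) : ℝ) : EReal) ≤ S := by
            rw [hSdef]; unfold gpe gpeOp
            exact le_sSup ⟨_, hadm, rfl⟩
          refine le_trans ?_ hle
          apply EReal.coe_le_coe_iff.mpr
          rw [← hc]
          nlinarith [mul_pos (mul_pos (sub_pos.mpr hbs)
            (show (0:ℝ) < (sn : ℝ) + b by linarith [hb.1])) hcle]
        have hkey2 : ((Rr ^ 2 * c : ℝ) : EReal) ≤ S := by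
          have hcont2 : Continuous (fun b : ℝ => b ^ 2 * c) :=
            (continuous_pow 2).mul continuous_const
          have htend : Tendsto (fun b : ℝ => ((b ^ 2 * c : ℝ) : EReal)) (𝓝[<] Rr)
              (𝓝 ((Rr ^ 2 * c : ℝ) : EReal)) :=
            (continuous_coe_real_ereal.tendsto _).comp
              ((hcont2.tendsto Rr).mono_left nhdsWithin_le_nhds)
          exact le_of_tendsto htend (Filter.eventually_of_mem
            (Ioo_mem_nhdsLT_of_mem ⟨hRrpos, le_rfl⟩) hkey)
        rcases eq_or_ne S ⊤ with hStop | hSne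
        · rw [hStop]
          have hTpos : (0 : EReal) < (((inradius Ω)⁻¹ ^ 2 : ℝ≥0∞) : EReal) :=
            EReal.coe_ennreal_pos.mpr (ENNReal.pow_pos (ENNReal.inv_pos.mpr hRne) 2)
          rw [EReal.top_mul_of_pos hTpos,
            EReal.add_top_of_ne_bot (by simp : ((-m : ℝ) : EReal) ≠ ⊥)]
          exact le_top
        · have hSbot : S ≠ ⊥ := by
            intro h; rw [h] at hS0; simp at hS0
          set Sr := S.toReal with hSr
          have hSeq : S = ((Sr : ℝ) : EReal) := (EReal.coe_toReal hSne hSbot).symm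
          have hreal : Rr ^ 2 * c ≤ Sr := by
            rw [hSeq] at hkey2
            exact EReal.coe_le_coe_iff.mp hkey2
          have hT : (((inradius Ω)⁻¹ ^ 2 : ℝ≥0∞) : EReal) = ((Rr⁻¹ ^ 2 : ℝ) : EReal) := by
            have hne2 : (inradius Ω)⁻¹ ^ 2 ≠ (⊤ : ℝ≥0∞) :=
              ENNReal.pow_ne_top (ENNReal.inv_ne_top.mpr (ne_of_gt hRpos))
            rw [coe_ennreal_eq_toReal hne2]
            congr 1
            rw [ENNReal.toReal_pow, ENNReal.toReal_inv]
          rw [hSeq, hT, ← EReal.coe_mul, ← EReal.coe_add]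
          apply EReal.coe_le_coe_iff.mpr
          have hc2 : c ≤ Sr * Rr⁻¹ ^ 2 := by
            have h2 : c * Rr ^ 2 ≤ Sr := by nlinarith
            have h4 : c = c * Rr ^ 2 * Rr⁻¹ ^ 2 := by
              field_simp
            rw [h4]
            have h5 : (0:ℝ) ≤ Rr⁻¹ ^ 2 := sq_nonneg _
            exact mul_le_mul_of_nonneg_right h2 h5
          linarith
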